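/- Let a ∈ ℝ with a ≠ 0, b > 0, c > 1, and M = [[a + i b c, −i b c], [−i b, −a + i b]]. Then both eigenvalues of M have strictly positive imaginary part. -/
import Mathlib


open Matrix Complex

/-- For `a ∈ ℝ` with `a ≠ 0`, `b > 0`, `c > 1` and
`M = [[a + ibc, −ibc], [−ib, −a + ib]]`, every eigenvalue of `M` has strictly positive
imaginary part. -/
theorem eigenvalues_of_M_im_pos
    (a b c : ℝ) (ha : a ≠ 0) (hb : 0 < b) (hc : 1 < c)
    (M : Matrix (Fin 2) (Fin 2) ℂ)
    (hM : M = !![(a : ℂ) + I * b * c, -(I * b * c); -(I * b), -(a : ℂ) + I * b]) :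
    ∀ z : ℂ, (M - z • (1 : Matrix (Fin 2) (Fin 2) ℂ)).det = 0 → 0 < z.im := by
  intro z hz
  subst hM
  by_contra hy
  push_neg at hy
  rw [Matrix.det_fin_two] at hz
  simp [Matrix.smul_apply, Matrix.one_apply] at hz
  have h1 := congrArg Complex.re hz
  have h2 := congrArg Complex.im hz
  simp [Complex.add_re, Complex.add_im, Complex.mul_re, Complex.mul_im,
    Complex.sub_re, Complex.sub_im] at h1 h2
  ring_nf at h1 h2
  set x := z.re
  set y := z.im
  have hA : 0 < a ^ 2 := by positivity
  have h2' : x * (2 * y - b * (c + 1)) = a * b * (c - 1) := by ring_nf; linarith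
  have hsq : (x * (2 * y - b * (c + 1))) ^ 2 = (a * b * (c - 1)) ^ 2 := by rw [h2']
  have hyB : 0 ≤ y * (y - b * (c + 1)) := by
    have h0 : 0 ≤ (-y) * (b * (c + 1) - y) :=
      mul_nonneg (by linarith) (by nlinarith)
    nlinarith [h0]
  nlinarith [hsq, h1, hyB, sq_nonneg (2 * y - b * (c + 1)), sq_nonneg x,
    mul_nonneg hyB (sq_nonneg (2 * y - b * (c + 1))),
    mul_pos hA (mul_pos hb hb), mul_pos hb hb,
    mul_nonneg (mul_nonneg hyB hA.le) (mul_pos hb hb).le,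
    mul_pos (mul_pos hA (mul_pos hb hb)) (by nlinarith : (0:ℝ) < c)]
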